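/- Let K be a field, m ≥ 3 and n ≥ 2m integers, k = ⌊(n+1)/(m+1)⌋, and 1 ≤ j ≤ k−1. Then the colon ideal L_j = (I_{n,m} : x_m x_{2m+1} x_{3m+2} ⋯ x_{j(m+1)−1}) (colon by the product ∏_{l=1}^{j} x_{l(m+1)−1}) equals the ideal of S generated by: for each 0 ≤ l ≤ j−1, the monomials u_i / x_{(l+1)(m+1)−1} for l(m+1)+1 ≤ i ≤ (l+1)(m+1)−1, together with the monomials u_i for j(m+1)+1 ≤ i ≤ n−m+1. -/

import Mathlib

open MvPolynomial

/-- The generator `u_i = x_i x_{i+1} ⋯ x_{i+m-1}` of the path ideal, where the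
variables of `K[x_1,…,x_n]` are 1-indexed via `x_t = X ⟨t-1⟩`. -/
noncomputable def pathGen (K : Type) [Field K] (n m i : ℕ) : MvPolynomial (Fin n) K :=
  ∏ j ∈ Finset.univ.filter (fun j : Fin n => i ≤ (j : ℕ) + 1 ∧ (j : ℕ) + 1 < i + m),
    X j

/-- The monomial `u_i / x_p = ∏_{i ≤ l ≤ i+m-1, l ≠ p} x_l`. -/
noncomputable def pathGenDiv (K : Type) [Field K] (n m i p : ℕ) : MvPolynomial (Fin n) K :=
  ∏ j ∈ Finset.univ.filter
      (fun j : Fin n => (i ≤ (j : ℕ) + 1 ∧ (j : ℕ) + 1 < i + m) ∧ (j : ℕ) + 1 ≠ p),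
    X j

/-- The path ideal `I_{n,m} = (u_1, …, u_{n-m+1}) ⊆ K[x_1,…,x_n]` of the line graph. -/
noncomputable def pathIdeal (K : Type) [Field K] (n m : ℕ) : Ideal (MvPolynomial (Fin n) K) :=
  Ideal.span {q | ∃ i : ℕ, 1 ≤ i ∧ i ≤ n - m + 1 ∧ q = pathGen K n m i}

/-- The variable `x_t` of `K[x_1,…,x_n]` (1-indexed; junk value `0` out of range). -/
noncomputable def xv (K : Type) [Field K] (n t : ℕ) : MvPolynomial (Fin n) K :=
  if h : 1 ≤ t ∧ t ≤ n then X (⟨t - 1, by omega⟩ : Fin n) else 0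

/-! The colon of a monomial ideal by a monomial `f` is generated by the quotients `u / gcd(u, f)`
of its generators; for squarefree monomials this deletes from `u` the variables of `f`. A window
`{i, …, i+m-1}` contains at most one of the positions `l(m+1)-1`, so `u_i / gcd(u_i, f)` is either
`u_i / x_{l(m+1)-1}` or `u_i` itself, and the generators `u_{l(m+1)}`, `l ≤ j`, obtained this way
are multiples of `u_{l(m+1)-1} / x_{l(m+1)-1}`. -/

theorem Ideal.span_le_span_of_forall_exists_dvd {R : Type*} [CommSemiring R] {S T : Set R}
    (h : ∀ a ∈ S, ∃ b ∈ T, b ∣ a) : Ideal.span S ≤ Ideal.span T :=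
  Ideal.span_le.2 fun a ha =>
    let ⟨_, hbT, hba⟩ := h a ha
    Ideal.mem_of_dvd _ hba (Ideal.subset_span hbT)

theorem Finset.sum_single_one_sdiff {σ : Type*} [DecidableEq σ] (s u : Finset σ) :
    ∑ t ∈ s \ u, Finsupp.single t 1 =
      ∑ t ∈ s, Finsupp.single t 1 - ∑ t ∈ u, Finsupp.single t 1 := by
  ext a
  simp only [Finsupp.coe_finsetSum, Finset.sum_apply, Finsupp.single_apply, Finset.sum_ite_eq',
    Finsupp.coe_tsub, Pi.sub_apply, Finset.mem_sdiff]
  split_ifs <;> simp_all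

namespace MvPolynomial

variable {σ R : Type*} [CommSemiring R]

theorem mem_support_monomial_one_mul {p : MvPolynomial σ R} {f d : σ →₀ ℕ} :
    d ∈ (monomial f 1 * p).support ↔ f ≤ d ∧ d - f ∈ p.support := by
  classical
  simp only [mem_support_iff, coeff_monomial_mul', one_mul]
  split_ifs with h <;> simp [h]

theorem colon_span_monomial_image (s : Set (σ →₀ ℕ)) (f : σ →₀ ℕ) :
    (Ideal.span ((fun a => monomial a (1 : R)) '' s)).colon
        (Ideal.span {monomial f (1 : R)} : Set (MvPolynomial σ R)) =
      Ideal.span ((fun a => monomial a (1 : R)) '' ((· - f) '' s)) := by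
  ext p
  rw [Ideal.mem_colon_span_singleton, mul_comm, mem_ideal_span_monomial_image,
    mem_ideal_span_monomial_image]
  simp only [mem_support_monomial_one_mul, Set.exists_mem_image, tsub_le_iff_left]
  constructor
  · intro h d hd
    exact h (f + d) ⟨le_self_add, by rwa [add_tsub_cancel_left]⟩
  · rintro h d ⟨hfd, hd⟩
    simpa [add_tsub_cancel_of_le hfd] using h _ hd

theorem prod_X_eq_monomial (s : Finset σ) :
    ∏ t ∈ s, (X t : MvPolynomial σ R) = monomial (∑ t ∈ s, Finsupp.single t 1) 1 :=
  (monomial_sum_one s _).symm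

theorem colon_span_prod_X_image [DecidableEq σ] {ι : Type*} (A : ι → Finset σ) (s : Set ι)
    (F : Finset σ) :
    (Ideal.span ((fun i => ∏ t ∈ A i, (X t : MvPolynomial σ R)) '' s)).colon
        (Ideal.span {∏ t ∈ F, (X t : MvPolynomial σ R)} : Set (MvPolynomial σ R)) =
      Ideal.span ((fun i => ∏ t ∈ A i \ F, (X t : MvPolynomial σ R)) '' s) := by
  simp only [prod_X_eq_monomial, Finset.sum_single_one_sdiff]
  rw [← Set.image_image (fun a => monomial a (1 : R)), colon_span_monomial_image, Set.image_image,
    Set.image_image]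

end MvPolynomial

open Finset

def varIdx (n : ℕ) (s : Finset ℕ) : Finset (Fin n) :=
  univ.filter fun t => (t : ℕ) + 1 ∈ s

@[simp]
theorem mem_varIdx {n : ℕ} {s : Finset ℕ} {t : Fin n} : t ∈ varIdx n s ↔ (t : ℕ) + 1 ∈ s := by
  simp [varIdx]

theorem varIdx_sdiff (n : ℕ) (s u : Finset ℕ) : varIdx n (s \ u) = varIdx n s \ varIdx n u := by
  ext; simp

theorem varIdx_mono {n : ℕ} {s u : Finset ℕ} (h : s ⊆ u) : varIdx n s ⊆ varIdx n u :=
  fun _ ht => mem_varIdx.2 (h (mem_varIdx.1 ht))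

section PathIdeal

variable (K : Type) [Field K] (n : ℕ)

theorem pathGen_eq_prod_X (m i : ℕ) :
    pathGen K n m i = ∏ t ∈ varIdx n (Ico i (i + m)), X t := by
  simp only [pathGen, varIdx, mem_Ico]

theorem pathGenDiv_eq_prod_X (m i p : ℕ) :
    pathGenDiv K n m i p = ∏ t ∈ varIdx n ((Ico i (i + m)).erase p), X t := by
  simp only [pathGenDiv, varIdx, mem_erase, mem_Ico, and_comm]

theorem pathIdeal_eq_span_image (m : ℕ) :
    pathIdeal K n m =
      Ideal.span ((fun i => ∏ t ∈ varIdx n (Ico i (i + m)), X t) '' Set.Icc 1 (n - m + 1)) := by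
  simp only [pathIdeal, ← pathGen_eq_prod_X]
  congr 1
  ext q
  simp [eq_comm, and_assoc]

theorem prod_xv_eq_prod_X {s : Finset ℕ} (hs : ∀ p ∈ s, 1 ≤ p ∧ p ≤ n) :
    ∏ p ∈ s, xv K n p = ∏ t ∈ varIdx n s, X t := by
  refine prod_bij' (fun p hp => ⟨p - 1, by have := hs p hp; omega⟩) (fun t _ => (t : ℕ) + 1)
    ?_ ?_ ?_ ?_ ?_
  · intro p hp
    simpa [Nat.sub_add_cancel (hs p hp).1] using hp
  · intro t ht
    simpa using ht
  · intro p hp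
    simp [Nat.sub_add_cancel (hs p hp).1]
  · intro t _
    simp
  · intro p hp
    simp [xv, hs p hp]

end PathIdeal

theorem Nat.eq_of_mul_mem_Ico {a b c d : ℕ} (ha : a * d ∈ Ico c (c + d))
    (hb : b * d ∈ Ico c (c + d)) : a = b := by
  rw [mem_Ico] at ha hb
  by_contra hne
  rcases Nat.lt_or_gt_of_ne hne with h | h <;>
  · have := Nat.mul_le_mul_right d (Nat.add_one_le_of_lt h)
    rw [add_one_mul] at this
    omega

def pivots (m j : ℕ) : Finset ℕ :=
  (Icc 1 j).image fun l => l * (m + 1) - 1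

theorem mem_pivots {m j p : ℕ} : p ∈ pivots m j ↔ ∃ l, (1 ≤ l ∧ l ≤ j) ∧ l * (m + 1) - 1 = p := by
  simp [pivots]

theorem prod_xv_pivots (K : Type) [Field K] {n m j : ℕ} (hm : 1 ≤ m) (hjn : j * (m + 1) ≤ n) :
    ∏ l ∈ Icc 1 j, xv K n (l * (m + 1) - 1) = ∏ t ∈ varIdx n (pivots m j), X t := by
  rw [← prod_xv_eq_prod_X, pivots, prod_image]
  · intro l hl l' hl' h
    simp only [coe_Icc, Set.mem_Icc] at hl hl' h
    have h1 := Nat.mul_le_mul_right (m + 1) hl.1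
    have h2 := Nat.mul_le_mul_right (m + 1) hl'.1
    exact Nat.eq_of_mul_eq_mul_right (by omega : 0 < m + 1) (by omega)
  · intro p hp
    obtain ⟨l, ⟨hl1, hlj⟩, rfl⟩ := mem_pivots.1 hp
    have h1 := Nat.mul_le_mul_right (m + 1) hl1
    have h2 := Nat.mul_le_mul_right (m + 1) hlj
    omega

theorem Ico_sdiff_pivots_of_le {m j i : ℕ} (h : j * (m + 1) ≤ i) :
    Ico i (i + m) \ pivots m j = Ico i (i + m) := by
  refine sdiff_eq_self_of_disjoint (disjoint_right.2 fun p hp => ?_)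
  obtain ⟨l, ⟨hl1, hlj⟩, rfl⟩ := mem_pivots.1 hp
  have := Nat.mul_le_mul_right (m + 1) hlj
  have := Nat.mul_le_mul_right (m + 1) hl1
  rw [mem_Ico]
  omega

theorem Ico_sdiff_pivots_of_block {m j l i : ℕ} (hl : l + 1 ≤ j) (hi₁ : l * (m + 1) + 1 ≤ i)
    (hi₂ : i ≤ (l + 1) * (m + 1) - 1) :
    Ico i (i + m) \ pivots m j = (Ico i (i + m)).erase ((l + 1) * (m + 1) - 1) := by
  have hexp := add_one_mul l (m + 1)
  ext p
  simp only [mem_sdiff, mem_erase, mem_Ico, mem_pivots, not_exists, not_and]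
  constructor
  · rintro ⟨hp, hnot⟩
    exact ⟨fun h => hnot (l + 1) ⟨by omega, hl⟩ h.symm, hp⟩
  · rintro ⟨hne, hp⟩
    refine ⟨hp, fun l' hl' h => hne ?_⟩
    have h1 := Nat.mul_le_mul_right (m + 1) hl'.1
    have : l' = l + 1 := Nat.eq_of_mul_mem_Ico (c := i + 1) (d := m + 1)
      (by rw [mem_Ico]; omega) (by rw [mem_Ico]; omega)
    rw [← h, this]

theorem exists_block_erase_subset {m j i : ℕ} (hm : 1 ≤ m) (hi₁ : 1 ≤ i)
    (hi₂ : i ≤ j * (m + 1)) :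
    ∃ l i', l + 1 ≤ j ∧ l * (m + 1) + 1 ≤ i' ∧ i' ≤ (l + 1) * (m + 1) - 1 ∧
      (Ico i' (i' + m)).erase ((l + 1) * (m + 1) - 1) ⊆ Ico i (i + m) \ pivots m j := by
  obtain ⟨q, r, hr, rfl⟩ : ∃ q r, r < m + 1 ∧ i = q * (m + 1) + r :=
    ⟨i / (m + 1), i % (m + 1), Nat.mod_lt _ m.succ_pos, (Nat.div_add_mod' i (m + 1)).symm⟩
  rcases Nat.eq_zero_or_pos r with rfl | hr₀
  · -- `u_i` with `i = q(m+1)` is a multiple of `u_{i-1} / x_{i-1}`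
    obtain ⟨l, rfl⟩ : ∃ l, q = l + 1 :=
      Nat.exists_eq_add_one.2 (Nat.pos_of_ne_zero (by rintro rfl; simp at hi₁))
    have hexp := add_one_mul l (m + 1)
    have hlj : l + 1 ≤ j := Nat.le_of_mul_le_mul_right (by omega) (by omega : 0 < m + 1)
    refine ⟨l, (l + 1) * (m + 1) - 1, hlj, by omega, by omega, ?_⟩
    intro p hp
    have hnot := (mem_sdiff.1 ((Ico_sdiff_pivots_of_block hlj (by omega) le_rfl).ge hp)).2
    rw [mem_erase, mem_Ico] at hp
    exact mem_sdiff.2 ⟨mem_Ico.2 (by omega), hnot⟩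
  · have hexp := add_one_mul q (m + 1)
    have hqj : q + 1 ≤ j := Nat.lt_of_mul_lt_mul_right (a := m + 1) (by omega)
    exact ⟨q, _, hqj, by omega, by omega, (Ico_sdiff_pivots_of_block hqj (by omega) (by omega)).ge⟩

theorem stmt_9_general (K : Type) [Field K] (n m : ℕ) (hm : 3 ≤ m)
    (k : ℕ) (hk : k = (n + 1) / (m + 1)) (j : ℕ) (hjk : j + 1 ≤ k) :
    (pathIdeal K n m).colon
        (Ideal.span {∏ l ∈ Finset.Icc 1 j, xv K n (l * (m + 1) - 1)}) =
      Ideal.span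
        ({q | ∃ l i : ℕ, l + 1 ≤ j ∧ l * (m + 1) + 1 ≤ i ∧ i ≤ (l + 1) * (m + 1) - 1 ∧
            q = pathGenDiv K n m i ((l + 1) * (m + 1) - 1)} ∪
          {q | ∃ i : ℕ, j * (m + 1) + 1 ≤ i ∧ i ≤ n - m + 1 ∧ q = pathGen K n m i}) := by
  have hjn : j * (m + 1) + m + 1 ≤ n + 1 := by
    have := (Nat.le_div_iff_mul_le (by omega)).1 (hk ▸ hjk)
    rwa [add_one_mul, ← add_assoc] at this
  rw [pathIdeal_eq_span_image, prod_xv_pivots K (by omega) (by omega), colon_span_prod_X_image]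
  simp only [← varIdx_sdiff]
  apply le_antisymm <;> apply Ideal.span_le_span_of_forall_exists_dvd
  · rintro _ ⟨i, hi, rfl⟩
    rcases le_or_gt i (j * (m + 1)) with hij | hij
    · obtain ⟨l, i', hl, hi'₁, hi'₂, hsub⟩ := exists_block_erase_subset (by omega) hi.1 hij
      refine ⟨_, Or.inl ⟨l, i', hl, hi'₁, hi'₂, rfl⟩, ?_⟩
      rw [pathGenDiv_eq_prod_X]
      exact prod_dvd_prod_of_subset _ _ _ (varIdx_mono hsub)
    · refine ⟨_, Or.inr ⟨i, hij, hi.2, rfl⟩, ?_⟩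
      dsimp only
      rw [pathGen_eq_prod_X, Ico_sdiff_pivots_of_le hij.le]
  · rintro _ (⟨l, i, hl, hi₁, hi₂, rfl⟩ | ⟨i, hi₁, hi₂, rfl⟩)
    · have := Nat.mul_le_mul_right (m + 1) hl
      refine ⟨_, ⟨i, ⟨by omega, by omega⟩, rfl⟩, ?_⟩
      dsimp only
      rw [pathGenDiv_eq_prod_X, Ico_sdiff_pivots_of_block hl hi₁ hi₂]
    · refine ⟨_, ⟨i, ⟨by omega, hi₂⟩, rfl⟩, ?_⟩
      dsimp only
      rw [pathGen_eq_prod_X, Ico_sdiff_pivots_of_le (Nat.le_of_succ_le hi₁)]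

/-- For `m ≥ 3`, `n ≥ 2m`, `k = ⌊(n+1)/(m+1)⌋` and `1 ≤ j ≤ k-1`, the colon ideal
`L_j = (I_{n,m} : x_m x_{2m+1} ⋯ x_{j(m+1)-1})` is generated by the monomials
`u_i / x_{(l+1)(m+1)-1}` for `0 ≤ l ≤ j-1` and `l(m+1)+1 ≤ i ≤ (l+1)(m+1)-1`,
together with the monomials `u_i` for `j(m+1)+1 ≤ i ≤ n-m+1`. -/
theorem stmt_9 (K : Type) [Field K] (n m : ℕ) (hm : 3 ≤ m) (hn : 2 * m ≤ n)
    (k : ℕ) (hk : k = (n + 1) / (m + 1)) (j : ℕ) (hj : 1 ≤ j) (hjk : j + 1 ≤ k) :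
    (pathIdeal K n m).colon
        (Ideal.span {∏ l ∈ Finset.Icc 1 j, xv K n (l * (m + 1) - 1)}) =
      Ideal.span
        ({q | ∃ l i : ℕ, l + 1 ≤ j ∧ l * (m + 1) + 1 ≤ i ∧ i ≤ (l + 1) * (m + 1) - 1 ∧
            q = pathGenDiv K n m i ((l + 1) * (m + 1) - 1)} ∪
          {q | ∃ i : ℕ, j * (m + 1) + 1 ≤ i ∧ i ≤ n - m + 1 ∧ q = pathGen K n m i}) :=
  stmt_9_general K n m hm k hk j hjk
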